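/- For the AND function f(x) = ∏_{j=1}^n x_j on {0,1}^n, the minimal possible revealment over all randomized decision-tree algorithms determining f is exactly (2 - 2^{1-n})/n. -/

import Mathlib

open Finset

/-- A (deterministic) decision tree on `n` input bits. -/
inductive DTree (n : ℕ) where
  | leaf (b : Bool)
  | node (i : Fin n) (t0 t1 : DTree n)

/-- The Boolean value computed by a decision tree. -/
def DTree.eval {n : ℕ} : DTree n → (Fin n → Bool) → Bool
  | .leaf b, _ => b
  | .node i t0 t1, x => if x i then t1.eval x else t0.eval x

/-- The set of input bits queried by a decision tree on input `x`. -/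
def DTree.queries {n : ℕ} : DTree n → (Fin n → Bool) → Finset (Fin n)
  | .leaf _, _ => ∅
  | .node i t0 t1, x => insert i (if x i then t1.queries x else t0.queries x)

/-!
A tree that computes the AND of the bits in `S` on the subcube where all other bits are true
must query some `i ∈ S` before it can stop, so it queries `i` on all `2 ^ |S|` inputs of the
subcube; on the half where `x i` is true it then goes on computing the AND of `S \ {i}`.
Inductively, the numbers of inputs on which the bits of `S` are queried add up to at least
`2 ^ |S| + ... + 2 = 2 ^ (|S| + 1) - 2`, and averaging over the `n` bits gives the lower bound
`(2 ^ (n + 1) - 2) / (n 2 ^ n)` on the revealment of any algorithm. It is attained by querying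
the bits in cyclic order from a uniformly random start: the `k`-th bit of that order is queried
on `2 ^ (n - k)` inputs, so each bit is queried on `2 ^ n + ... + 2` inputs in total over the
`n` starting points.
-/

section

variable {n : ℕ}

def trueOutside (S : Finset (Fin n)) : Finset (Fin n → Bool) :=
  {x | ∀ j ∉ S, x j = true}

theorem card_trueOutside (S : Finset (Fin n)) : #(trueOutside S) = 2 ^ #S := by
  have : trueOutside S = Fintype.piFinset fun j => if j ∈ S then univ else {true} := by
    ext x
    simp only [trueOutside, mem_filter, mem_univ, true_and, Fintype.mem_piFinset]
    refine forall_congr' fun j => ?_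
    split_ifs with h <;> simp [h]
  rw [this, Fintype.card_piFinset]
  simp [apply_ite card]

theorem card_filter_forall_mem_true (A : Finset (Fin n)) :
    #{x : Fin n → Bool | ∀ j ∈ A, x j = true} = 2 ^ (n - #A) := by
  have : ({x | ∀ j ∈ A, x j = true} : Finset (Fin n → Bool)) = trueOutside Aᶜ := by
    simp [trueOutside]
  rw [this, card_trueOutside, card_compl, Fintype.card_fin]

theorem trueOutside_mono {S T : Finset (Fin n)} (h : S ⊆ T) : trueOutside S ⊆ trueOutside T := by
  intro x hx
  simp only [trueOutside, mem_filter, mem_univ, true_and] at hx ⊢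
  exact fun j hj => hx j fun hjS => hj (h hjS)

theorem trueOutside_univ : trueOutside (univ : Finset (Fin n)) = univ := by
  simp [trueOutside]

namespace DTree

theorem eval_node_of_true {i : Fin n} {t0 t1 : DTree n} {x : Fin n → Bool} (hx : x i = true) :
    (node i t0 t1).eval x = t1.eval x := by
  simp [eval, hx]

theorem queries_node_of_true {i : Fin n} {t0 t1 : DTree n} {x : Fin n → Bool} (hx : x i = true) :
    (node i t0 t1).queries x = insert i (t1.queries x) := by
  simp [queries, hx]

theorem eq_empty_of_eval_leaf {b : Bool} {S : Finset (Fin n)}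
    (h : ∀ x ∈ trueOutside S, (leaf b : DTree n).eval x = decide (∀ j ∈ S, x j = true)) :
    S = ∅ := by
  by_contra hS
  obtain ⟨i, hi⟩ := nonempty_iff_ne_empty.2 hS
  have h1 := h (fun _ => true) (by simp [trueOutside])
  have h0 := h (Function.update (fun _ => true) i false) (by
    simp only [trueOutside, mem_filter, mem_univ, true_and]
    intro j hj
    rw [Function.update_of_ne (ne_of_mem_of_not_mem hi hj).symm])
  simp only [eval] at h1 h0
  rw [h1] at h0
  simp only [decide_eq_decide] at h0
  simpa using h0.1 (fun _ _ => trivial) i hi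

theorem mem_queries_node_self (i : Fin n) (t0 t1 : DTree n) (x : Fin n → Bool) :
    i ∈ (node i t0 t1).queries x := by
  simp [queries]

theorem sum_range_le_sum_card_queries (T : DTree n) (S : Finset (Fin n))
    (hT : ∀ x ∈ trueOutside S, T.eval x = decide (∀ j ∈ S, x j = true)) :
    ∑ k ∈ range #S, 2 ^ (k + 1) ≤ ∑ j ∈ S, #{x ∈ trueOutside S | j ∈ T.queries x} := by
  induction T generalizing S with
  | leaf b => simp [eq_empty_of_eval_leaf hT]
  | node i t0 t1 _ ih1 =>
    have hsub : trueOutside (S.erase i) ⊆ trueOutside S := trueOutside_mono (erase_subset i S)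
    have htrue : ∀ x ∈ trueOutside (S.erase i), x i = true := fun x hx =>
      (mem_filter.1 hx).2 i (notMem_erase i S)
    have ht1 : ∀ x ∈ trueOutside (S.erase i),
        t1.eval x = decide (∀ j ∈ S.erase i, x j = true) := by
      intro x hx
      rw [← eval_node_of_true (t0 := t0) (htrue x hx), hT x (hsub hx), decide_eq_decide]
      exact ⟨fun h j hj => h j (mem_of_mem_erase hj),
        fun h j hj => if hji : j = i then hji ▸ htrue x hx else h j (mem_erase.2 ⟨hji, hj⟩)⟩
    have hcount : ∀ j, #{x ∈ trueOutside (S.erase i) | j ∈ t1.queries x} ≤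
        #{x ∈ trueOutside S | j ∈ (node i t0 t1).queries x} := by
      refine fun j => card_le_card fun x hx => ?_
      rw [mem_filter] at hx ⊢
      rw [queries_node_of_true (htrue x hx.1)]
      exact ⟨hsub hx.1, mem_insert_of_mem hx.2⟩
    by_cases hi : i ∈ S
    · have hfirst : #{x ∈ trueOutside S | i ∈ (node i t0 t1).queries x} = 2 ^ #S := by
        rw [filter_true_of_mem fun x _ => mem_queries_node_self i t0 t1 x, card_trueOutside]
      calc ∑ k ∈ range #S, 2 ^ (k + 1)
          = ∑ k ∈ range #(S.erase i), 2 ^ (k + 1) + 2 ^ #S := by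
            rw [← card_erase_add_one hi, sum_range_succ]
        _ ≤ ∑ j ∈ S.erase i, #{x ∈ trueOutside S | j ∈ (node i t0 t1).queries x} +
              #{x ∈ trueOutside S | i ∈ (node i t0 t1).queries x} := by
            rw [hfirst]
            exact Nat.add_le_add_right ((ih1 _ ht1).trans (sum_le_sum fun j _ => hcount j)) _
        _ = _ := sum_erase_add _ _ hi
    · rw [erase_eq_of_notMem hi] at ht1 hcount
      exact (ih1 S ht1).trans (sum_le_sum fun j _ => hcount j)

def chain : List (Fin n) → DTree n
  | [] => leaf true
  | j :: L => node j (leaf false) (chain L)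

theorem eval_chain (L : List (Fin n)) (x : Fin n → Bool) :
    (chain L).eval x = decide (∀ j ∈ L, x j = true) := by
  induction L with
  | nil => simp [chain, eval]
  | cons a L ih => cases h : x a <;> simp [chain, eval, ih, h]

theorem getElem_mem_queries_chain_iff {L : List (Fin n)} (hL : L.Nodup) {k : ℕ}
    (hk : k < L.length) (x : Fin n → Bool) :
    L[k] ∈ (chain L).queries x ↔ ∀ j ∈ L.take k, x j = true := by
  induction L generalizing k with
  | nil => simp at hk
  | cons a L ih =>
    obtain ⟨haL, hL⟩ := List.nodup_cons.1 hL
    cases k with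
    | zero => simp [chain, queries]
    | succ k =>
      have hk' : k < L.length := Nat.lt_of_succ_lt_succ hk
      have hne : L[k] ≠ a := fun h => haL (h ▸ List.getElem_mem hk')
      cases h : x a <;> simp [chain, queries, h, hne, ih hL hk']

def rotChain (r : Fin n) : DTree n :=
  chain ((List.finRange n).map (r + ·))

theorem eval_rotChain (r : Fin n) (x : Fin n → Bool) :
    (rotChain r).eval x = decide (∀ i, x i = true) := by
  have : NeZero n := NeZero.of_pos r.pos
  simp only [rotChain, eval_chain, List.mem_map, List.mem_finRange, true_and,
    forall_exists_index, forall_apply_eq_imp_iff]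
  exact decide_eq_decide.2 ⟨fun h i => by simpa using h (i - r), fun h k => h _⟩

theorem card_queries_rotChain (r i : Fin n) :
    #{x | i ∈ (rotChain r).queries x} = 2 ^ (n - (i - r : Fin n).val) := by
  have : NeZero n := NeZero.of_pos r.pos
  set L := (List.finRange n).map (r + ·)
  have hL : L.Nodup := (List.nodup_finRange n).map fun _ _ => add_left_cancel
  have hk : (i - r : Fin n).val < L.length := by simp [L]
  have hi : L[(i - r : Fin n).val] = i := by
    simp only [L, List.getElem_map, List.getElem_finRange]
    rw [Fin.cast_mk, Fin.eta, add_sub_cancel]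
  have htake : #(L.take (i - r : Fin n).val).toFinset = (i - r : Fin n).val := by
    rw [List.toFinset_card_of_nodup (hL.sublist (List.take_sublist _ _)), List.length_take]
    omega
  have hmem : ∀ x, i ∈ (rotChain r).queries x ↔
      ∀ j ∈ (L.take (i - r : Fin n).val).toFinset, x j = true := fun x => by
    simpa [rotChain, hi] using getElem_mem_queries_chain_iff hL hk x
  rw [filter_congr fun x _ => hmem x, card_filter_forall_mem_true, htake]

theorem sum_card_queries_rotChain (i : Fin n) :
    ∑ r, #{x | i ∈ (rotChain r).queries x} = ∑ k ∈ range n, 2 ^ (k + 1) := by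
  have : NeZero n := NeZero.of_pos i.pos
  simp_rw [card_queries_rotChain]
  rw [← Fin.sum_univ_eq_sum_range, ← (Equiv.subLeft i).sum_comp, ← Equiv.sum_comp Fin.revPerm]
  refine sum_congr rfl fun k _ => ?_
  simp only [Equiv.subLeft_apply, sub_sub_cancel, Fin.revPerm_apply, Fin.val_rev]
  congr 1
  omega

theorem sum_range_le_sum_card_queries_of_eval_eq_and {T : DTree n}
    (hT : ∀ x, T.eval x = decide (∀ i, x i = true)) :
    ∑ k ∈ range n, 2 ^ (k + 1) ≤ ∑ i, #{x | i ∈ T.queries x} := by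
  simpa [trueOutside_univ] using sum_range_le_sum_card_queries T univ fun x _ => by simp [hT]

end DTree

end

theorem le_card_mul_of_weighted_sum_le {ι R 𝕜 : Type*} [Fintype ι] [Fintype R] [CommSemiring 𝕜]
    [PartialOrder 𝕜] [IsOrderedRing 𝕜] {ρ : R → 𝕜} {c : R → ι → 𝕜} {B D : 𝕜}
    (hρ : ∀ r, 0 ≤ ρ r) (hρ1 : ∑ r, ρ r = 1) (hB : ∀ r, B ≤ ∑ i, c r i)
    (hD : ∀ i, ∑ r, ρ r * c r i ≤ D) :
    B ≤ Fintype.card ι * D :=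
  calc B = ∑ r, ρ r * B := by rw [← sum_mul, hρ1, one_mul]
    _ ≤ ∑ r, ρ r * ∑ i, c r i := sum_le_sum fun r _ => mul_le_mul_of_nonneg_left (hB r) (hρ r)
    _ = ∑ i, ∑ r, ρ r * c r i := by simp_rw [mul_sum]; exact sum_comm
    _ ≤ ∑ _i : ι, D := sum_le_sum fun i _ => hD i
    _ = Fintype.card ι * D := by rw [sum_const, card_univ, nsmul_eq_mul]

theorem cast_sum_range_two_pow_succ (n : ℕ) :
    ((∑ k ∈ range n, 2 ^ (k + 1) : ℕ) : ℝ) = 2 ^ n * (2 - 2 ^ ((1 : ℤ) - n)) := by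
  push_cast
  rw [zpow_sub₀ two_ne_zero, zpow_one, zpow_natCast]
  simp_rw [pow_succ, ← sum_mul, geom_sum_eq (by norm_num : (2 : ℝ) ≠ 1)]
  field_simp
  ring

/-- **Theorem.**  The minimal possible revealment over all randomized decision-tree algorithms
determining the AND function `f(x) = ∏_{j=1}^n x_j` on `{0,1}ⁿ` is exactly `(2 - 2^{1-n})/n`.
Here an algorithm is a probability distribution `ρ` over decision trees, each of which computes
AND, and its revealment is `max_{i} P[i is queried]` where the probability is over both the
uniform random input and the algorithm's randomness. -/
theorem and_minimal_revealment {n : ℕ} (hn : 0 < n) :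
    IsLeast
      {δ : ℝ | ∃ (R : Type) (_ : Fintype R) (ρ : R → ℝ) (T : R → DTree n),
        (∀ r, 0 ≤ ρ r) ∧ (∑ r, ρ r = 1) ∧
        (∀ r x, (T r).eval x = decide (∀ i, x i = true)) ∧
        (∀ i : Fin n,
          (∑ r, ρ r * ((Finset.univ.filter
              (fun x : Fin n → Bool => i ∈ (T r).queries x)).card : ℝ)) / 2 ^ n ≤ δ) ∧
        (∃ i : Fin n,
          (∑ r, ρ r * ((Finset.univ.filter
              (fun x : Fin n → Bool => i ∈ (T r).queries x)).card : ℝ)) / 2 ^ n = δ)}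
      ((2 - (2 : ℝ) ^ ((1 : ℤ) - (n : ℤ))) / n) := by
  have h2n : (0 : ℝ) < 2 ^ n := by positivity
  have hn' : (0 : ℝ) < n := by exact_mod_cast hn
  have hrot (i : Fin n) : (∑ r, (n : ℝ)⁻¹ * #{x | i ∈ (DTree.rotChain r).queries x}) / 2 ^ n =
      (2 - (2 : ℝ) ^ ((1 : ℤ) - (n : ℤ))) / n := by
    rw [← mul_sum, ← Nat.cast_sum, DTree.sum_card_queries_rotChain, cast_sum_range_two_pow_succ]
    field_simp
  refine ⟨⟨Fin n, inferInstance, fun _ => (n : ℝ)⁻¹, DTree.rotChain, fun _ => by positivity,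
    by simp [hn.ne'], fun r x => DTree.eval_rotChain r x, fun i => (hrot i).le,
    ⟨⟨0, hn⟩, hrot _⟩⟩, ?_⟩
  rintro δ ⟨R, _, ρ, T, hρ, hρ1, hT, hδ, -⟩
  have hB (r : R) : ((∑ k ∈ range n, 2 ^ (k + 1) : ℕ) : ℝ) ≤
      ∑ i, (#{x | i ∈ (T r).queries x} : ℝ) := by
    exact_mod_cast DTree.sum_range_le_sum_card_queries_of_eval_eq_and (hT r)
  have hmain := le_card_mul_of_weighted_sum_le hρ hρ1 hB fun i => (div_le_iff₀ h2n).1 (hδ i)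
  rw [cast_sum_range_two_pow_succ, Fintype.card_fin] at hmain
  rw [div_le_iff₀ hn']
  exact le_of_mul_le_mul_left (by linarith) h2n
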